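/- arXiv:1705.08614 — 2 statements merged into one kernel-verified Lean document; each statement's English description precedes it below -/
import Mathlib

section
/- Let V and W be real inner product spaces. Let z, r_mu, r1 be elements of V, let dd, rd be elements of W, let s0, sT ≥ 0 and κ > 0 be real numbers, and let P be a real number with |P| ≤ κ‖r1‖‖dd‖. Assume the identity ‖dd‖² + ‖z‖² + sT/2 = s0/2 + ⟨r_mu, z⟩ + P + ⟨rd, dd⟩. Then for every ν ∈ (0,2], every γ ≥ 1/2, and all α₁, α₂ > 0 with 1/α₁ + 1/α₂ = ν, one has (2−ν)‖dd‖² + (2 − 1/γ)‖z‖² + sT ≤ s0 + γ‖r_mu‖² + α₁‖rd‖² + α₂ κ² ‖r1‖². -/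
/-! Double the identity and bound each of the three pairings by the weighted Young inequality
`2ab ≤ c a² + b² / c`, with weights `γ`, `α₁`, `α₂`; the two `‖dd‖²` remainders add up to
`ν ‖dd‖²` because `1/α₁ + 1/α₂ = ν`. -/

open scoped RealInnerProductSpace

theorem two_mul_le_mul_sq_add_sq_div {a b c : ℝ} (hc : 0 < c) :
    2 * (a * b) ≤ c * a ^ 2 + b ^ 2 / c := by
  have key : c * a ^ 2 + b ^ 2 / c - 2 * (a * b) = (c * a - b) ^ 2 / c := by
    field_simp
    ring
  have : 0 ≤ (c * a - b) ^ 2 / c := by positivity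
  linarith

theorem two_mul_inner_le_mul_sq_add_sq_div {E : Type*} [NormedAddCommGroup E]
    [InnerProductSpace ℝ E] (x y : E) {c : ℝ} (hc : 0 < c) :
    2 * ⟪x, y⟫ ≤ c * ‖x‖ ^ 2 + ‖y‖ ^ 2 / c :=
  (mul_le_mul_of_nonneg_left (real_inner_le_norm x y) zero_le_two).trans
    (two_mul_le_mul_sq_add_sq_div hc)

theorem abstract_majorant_bound_general
    {V W : Type*} [NormedAddCommGroup V] [InnerProductSpace ℝ V]
    [NormedAddCommGroup W] [InnerProductSpace ℝ W]
    (z r_mu r1 : V) (dd rd : W)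
    (s0 sT κ P : ℝ)
    (hP : |P| ≤ κ * ‖r1‖ * ‖dd‖)
    (hid : ‖dd‖ ^ 2 + ‖z‖ ^ 2 + sT / 2 = s0 / 2 + ⟪r_mu, z⟫ + P + ⟪rd, dd⟫) :
    ∀ ν ∈ Set.Ioc (0 : ℝ) 2, ∀ γ : ℝ, 1 / 2 ≤ γ →
    ∀ α₁ α₂ : ℝ, 0 < α₁ → 0 < α₂ → 1 / α₁ + 1 / α₂ = ν →
      (2 - ν) * ‖dd‖ ^ 2 + (2 - 1 / γ) * ‖z‖ ^ 2 + sT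
        ≤ s0 + γ * ‖r_mu‖ ^ 2 + α₁ * ‖rd‖ ^ 2 + α₂ * κ ^ 2 * ‖r1‖ ^ 2 := by
  intro ν _ γ hγ α₁ α₂ hα₁ hα₂ hν
  have hz := two_mul_inner_le_mul_sq_add_sq_div r_mu z (lt_of_lt_of_le one_half_pos hγ)
  have hd := two_mul_inner_le_mul_sq_add_sq_div rd dd hα₁
  have hPd : 2 * P ≤ α₂ * κ ^ 2 * ‖r1‖ ^ 2 + ‖dd‖ ^ 2 / α₂ :=
    calc 2 * P ≤ 2 * (κ * ‖r1‖ * ‖dd‖) := by linarith [le_of_abs_le hP]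
      _ ≤ α₂ * (κ * ‖r1‖) ^ 2 + ‖dd‖ ^ 2 / α₂ := two_mul_le_mul_sq_add_sq_div hα₂
      _ = α₂ * κ ^ 2 * ‖r1‖ ^ 2 + ‖dd‖ ^ 2 / α₂ := by ring
  have hdd : ‖dd‖ ^ 2 / α₁ + ‖dd‖ ^ 2 / α₂ = ν * ‖dd‖ ^ 2 := by
    rw [← hν]
    ring
  have hzγ : ‖z‖ ^ 2 / γ = 1 / γ * ‖z‖ ^ 2 := by ring
  linarith

/-- Abstract inner-product-space core of Theorem 1(a): from the error identity and the
Friedrichs-type bound on the pairing `P`, the weighted majorant bound follows. -/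
theorem abstract_majorant_bound
    {V W : Type*} [NormedAddCommGroup V] [InnerProductSpace ℝ V]
    [NormedAddCommGroup W] [InnerProductSpace ℝ W]
    (z r_mu r1 : V) (dd rd : W)
    (s0 sT κ P : ℝ) (hs0 : 0 ≤ s0) (hsT : 0 ≤ sT) (hκ : 0 < κ)
    (hP : |P| ≤ κ * ‖r1‖ * ‖dd‖)
    (hid : ‖dd‖ ^ 2 + ‖z‖ ^ 2 + sT / 2 = s0 / 2 + ⟪r_mu, z⟫ + P + ⟪rd, dd⟫) :
    ∀ ν ∈ Set.Ioc (0 : ℝ) 2, ∀ γ : ℝ, 1 / 2 ≤ γ →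
    ∀ α₁ α₂ : ℝ, 0 < α₁ → 0 < α₂ → 1 / α₁ + 1 / α₂ = ν →
      (2 - ν) * ‖dd‖ ^ 2 + (2 - 1 / γ) * ‖z‖ ^ 2 + sT
        ≤ s0 + γ * ‖r_mu‖ ^ 2 + α₁ * ‖rd‖ ^ 2 + α₂ * κ ^ 2 * ‖r1‖ ^ 2 :=
  abstract_majorant_bound_general z r_mu r1 dd rd s0 sT κ P hP hid
end

section
/- Let u be a classical solution of σ u_t − div_x(A∇ₓu) + b·∇ₓu + c u = f in Q with u = u_D on Σ, and let v be smooth on cl(Q) with v = u_D on Σ and v(·,0) = u₀ = u(·,0) (so e := u − v satisfies e(·,0) = 0). Suppose the exact flux A∇ₓu is C¹ in the spatial variables. Then pointwise on Q: R_d(v, A∇ₓu) = A∇ₓe and R_eq(v, A∇ₓu) = σ e_t + c e + b·∇ₓe; consequently, for the parameter choice ν = 1, γ = 1, μ ≡ 0 and any α₁, α₂ > 0 with 1/α₁ + 1/α₂ = 1, the majorant satisfies Maj(v, A∇ₓu; 1, 1, 0, α₁, α₂) = ∫_0^T ( α₁‖∇ₓe‖²_{A,Ω} + α₂·(C_F²/ν_A)·‖σ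 e_t + c e + b·∇ₓe‖²_Ω ) dt. -/
open MeasureTheory Set Matrix

noncomputable section

/-- Open axis-parallel box in `ℝᵈ` with corners `a₀`, `a₁`. -/
def box {d : ℕ} (a₀ a₁ : Fin d → ℝ) : Set (Fin d → ℝ) :=
  {x | ∀ i, x i ∈ Set.Ioo (a₀ i) (a₁ i)}

/-- Gradient of a scalar field on `ℝᵈ`. -/
def grads {d : ℕ} (w : (Fin d → ℝ) → ℝ) (x : Fin d → ℝ) : Fin d → ℝ :=
  fun i => fderiv ℝ w x (Pi.single i 1)

/-- Spatial gradient `∇ₓw` of a time-dependent scalar field. -/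
def gradx {d : ℕ} (w : (Fin d → ℝ) → ℝ → ℝ) (x : Fin d → ℝ) (t : ℝ) : Fin d → ℝ :=
  fun i => fderiv ℝ (fun z => w z t) x (Pi.single i 1)

/-- Spatial divergence `div_x y` of a time-dependent vector field. -/
def divx {d : ℕ} (y : (Fin d → ℝ) → ℝ → Fin d → ℝ) (x : Fin d → ℝ) (t : ℝ) : ℝ :=
  ∑ i, fderiv ℝ (fun z => y z t i) x (Pi.single i 1)

/-- Divergence of a static vector field on `ℝᵈ`. -/
def divv {d : ℕ} (bb : (Fin d → ℝ) → Fin d → ℝ) (x : Fin d → ℝ) : ℝ :=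
  ∑ i, fderiv ℝ (fun z => bb z i) x (Pi.single i 1)

/-- Time derivative `∂ₜw` of a time-dependent scalar field. -/
def tderiv {d : ℕ} (w : (Fin d → ℝ) → ℝ → ℝ) (x : Fin d → ℝ) (t : ℝ) : ℝ :=
  deriv (w x) t

/-- Equation residual `R_eq(v,y) = f + div_x y − σ v_t − c v − b·∇ₓv`. -/
def Req {d : ℕ} (σ : ℝ) (bb : (Fin d → ℝ) → Fin d → ℝ) (c : (Fin d → ℝ) → ℝ)
    (f v : (Fin d → ℝ) → ℝ → ℝ) (y : (Fin d → ℝ) → ℝ → Fin d → ℝ)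
    (x : Fin d → ℝ) (t : ℝ) : ℝ :=
  f x t + divx y x t - σ * tderiv v x t - c x * v x t - bb x ⬝ᵥ gradx v x t

/-- Flux residual `R_d(v,y) = y − A∇ₓv`. -/
def Rd {d : ℕ} (A : (Fin d → ℝ) → Matrix (Fin d) (Fin d) ℝ)
    (v : (Fin d → ℝ) → ℝ → ℝ) (y : (Fin d → ℝ) → ℝ → Fin d → ℝ)
    (x : Fin d → ℝ) (t : ℝ) : Fin d → ℝ :=
  y x t - (A x).mulVec (gradx v x t)

/-- The functional majorant
`Maj(v,y;γ,μ,α₁,α₂) = σ‖u₀ − v(·,0)‖²_Ω + ∫₀ᵀ ( γ‖(1/δ)μR_eq‖²_Ω + α₁‖R_d‖²_{A⁻¹,Ω}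
  + α₂ (C_F²/ν_A) ‖(1−μ)R_eq‖²_Ω ) dt`, with `δ² = c − (1/2)div_x b`. -/
def Maj {d : ℕ} (T : ℝ) (a₀ a₁ : Fin d → ℝ)
    (A : (Fin d → ℝ) → Matrix (Fin d) (Fin d) ℝ) (σ : ℝ)
    (bb : (Fin d → ℝ) → Fin d → ℝ) (c : (Fin d → ℝ) → ℝ)
    (f : (Fin d → ℝ) → ℝ → ℝ) (u₀ : (Fin d → ℝ) → ℝ) (CF νA : ℝ)
    (v : (Fin d → ℝ) → ℝ → ℝ) (y : (Fin d → ℝ) → ℝ → Fin d → ℝ)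
    (γ : ℝ) (μ : (Fin d → ℝ) → ℝ) (α₁ α₂ : ℝ) : ℝ :=
  σ * (∫ x in box a₀ a₁, (u₀ x - v x 0) ^ 2)
  + ∫ t in (0 : ℝ)..T,
      (γ * ∫ x in box a₀ a₁,
          (μ x * Req σ bb c f v y x t) ^ 2 / (c x - (1 / 2) * divv bb x))
      + (α₁ * ∫ x in box a₀ a₁,
          (A x)⁻¹.mulVec (Rd A v y x t) ⬝ᵥ Rd A v y x t)
      + α₂ * (CF ^ 2 / νA) * ∫ x in box a₀ a₁,
          ((1 - μ x) * Req σ bb c f v y x t) ^ 2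

/-!
With the exact flux `y = A∇ₓu`, the equation satisfied by `u` replaces `f + div_x y` by
`σu_t + b·∇ₓu + cu`, so both residuals become linear expressions in `e = u − v`. The initial
term vanishes because `v(·,0) = u₀`, the weight `μ ≡ 0` removes the `γ`-term, and coercivity
makes `A(x)` invertible (so `A⁻¹` is not Mathlib's junk inverse), whence
`A⁻¹(A∇ₓe)·(A∇ₓe) = A∇ₓe·∇ₓe`.
-/

section Calculus

variable {E F : Type*} [NormedAddCommGroup E] [NormedSpace ℝ E]
  [NormedAddCommGroup F] [NormedSpace ℝ F]

lemma Differentiable.differentiableAt_curry_fst {w : E → F → ℝ}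
    (hw : Differentiable ℝ fun p : E × F => w p.1 p.2) (x : E) (t : F) :
    DifferentiableAt ℝ (fun z => w z t) x :=
  hw.comp (differentiable_id.prodMk (differentiable_const t)) x

lemma Differentiable.differentiableAt_curry_snd {w : E → F → ℝ}
    (hw : Differentiable ℝ fun p : E × F => w p.1 p.2) (x : E) (t : F) :
    DifferentiableAt ℝ (w x) t :=
  hw.comp ((differentiable_const x).prodMk differentiable_id) t

end Calculus

section Residuals

variable {d : ℕ}

lemma gradx_sub {w₁ w₂ : (Fin d → ℝ) → ℝ → ℝ} {x : Fin d → ℝ} {t : ℝ}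
    (h₁ : DifferentiableAt ℝ (fun z => w₁ z t) x) (h₂ : DifferentiableAt ℝ (fun z => w₂ z t) x) :
    gradx (fun z s => w₁ z s - w₂ z s) x t = gradx w₁ x t - gradx w₂ x t := by
  funext i
  simp only [gradx, fderiv_fun_sub h₁ h₂, _root_.sub_apply, Pi.sub_apply]

lemma tderiv_sub {w₁ w₂ : (Fin d → ℝ) → ℝ → ℝ} {x : Fin d → ℝ} {t : ℝ}
    (h₁ : DifferentiableAt ℝ (w₁ x) t) (h₂ : DifferentiableAt ℝ (w₂ x) t) :
    tderiv (fun z s => w₁ z s - w₂ z s) x t = tderiv w₁ x t - tderiv w₂ x t :=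
  deriv_sub h₁ h₂

variable {u v : (Fin d → ℝ) → ℝ → ℝ}

lemma Rd_exact_flux (A : (Fin d → ℝ) → Matrix (Fin d) (Fin d) ℝ)
    (hu : Differentiable ℝ fun p : (Fin d → ℝ) × ℝ => u p.1 p.2)
    (hv : Differentiable ℝ fun p : (Fin d → ℝ) × ℝ => v p.1 p.2) (x : Fin d → ℝ) (t : ℝ) :
    Rd A v (fun z s => A z *ᵥ gradx u z s) x t = A x *ᵥ gradx (fun z s => u z s - v z s) x t := by
  rw [Rd, gradx_sub (hu.differentiableAt_curry_fst x t) (hv.differentiableAt_curry_fst x t),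
    mulVec_sub]

lemma Req_exact_flux {A : (Fin d → ℝ) → Matrix (Fin d) (Fin d) ℝ} {σ : ℝ}
    {bb : (Fin d → ℝ) → Fin d → ℝ} {c : (Fin d → ℝ) → ℝ} {f : (Fin d → ℝ) → ℝ → ℝ}
    (hu : Differentiable ℝ fun p : (Fin d → ℝ) × ℝ => u p.1 p.2)
    (hv : Differentiable ℝ fun p : (Fin d → ℝ) × ℝ => v p.1 p.2) {x : Fin d → ℝ} {t : ℝ}
    (hpde : σ * tderiv u x t - divx (fun z s => A z *ᵥ gradx u z s) x t
        + bb x ⬝ᵥ gradx u x t + c x * u x t = f x t) :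
    Req σ bb c f v (fun z s => A z *ᵥ gradx u z s) x t
      = σ * tderiv (fun z s => u z s - v z s) x t + c x * (u x t - v x t)
        + bb x ⬝ᵥ gradx (fun z s => u z s - v z s) x t := by
  rw [Req, gradx_sub (hu.differentiableAt_curry_fst x t) (hv.differentiableAt_curry_fst x t),
    tderiv_sub (hu.differentiableAt_curry_snd x t) (hv.differentiableAt_curry_snd x t),
    dotProduct_sub, ← hpde]
  ring

end Residuals

section LinearAlgebra

variable {n : Type*} [Fintype n] [DecidableEq n]

lemma Matrix.isUnit_det_of_coercive {M : Matrix n n ℝ} {ν : ℝ} (hν : 0 < ν)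
    (hM : ∀ ξ : n → ℝ, ν * (ξ ⬝ᵥ ξ) ≤ M *ᵥ ξ ⬝ᵥ ξ) : IsUnit M.det := by
  refine (isUnit_iff_ne_zero).2 fun hdet => ?_
  obtain ⟨ξ, hξ, hMξ⟩ := exists_mulVec_eq_zero_iff.2 hdet
  have hξξ : ξ ⬝ᵥ ξ ≤ 0 := by
    have := hM ξ
    rw [hMξ, zero_dotProduct] at this
    exact nonpos_of_mul_nonpos_right this hν
  exact hξ (dotProduct_self_eq_zero.1 (le_antisymm hξξ (dotProduct_self_star_nonneg ξ)))

lemma Matrix.inv_mulVec_mulVec_dotProduct {M : Matrix n n ℝ} (hM : IsUnit M.det) (g : n → ℝ) :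
    M⁻¹ *ᵥ (M *ᵥ g) ⬝ᵥ (M *ᵥ g) = M *ᵥ g ⬝ᵥ g := by
  rw [mulVec_mulVec, nonsing_inv_mul _ hM, one_mulVec, dotProduct_comm]

end LinearAlgebra

lemma measurableSet_box {d : ℕ} (a₀ a₁ : Fin d → ℝ) : MeasurableSet (box a₀ a₁) := by
  have hpi : box a₀ a₁ = Set.univ.pi fun i => Set.Ioo (a₀ i) (a₁ i) := by
    ext x
    simp [box, Set.mem_pi]
  exact hpi ▸ MeasurableSet.univ_pi fun _ => measurableSet_Ioo

lemma Maj_of_weight_zero {d : ℕ} (T : ℝ) (a₀ a₁ : Fin d → ℝ)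
    (A : (Fin d → ℝ) → Matrix (Fin d) (Fin d) ℝ) (σ : ℝ)
    (bb : (Fin d → ℝ) → Fin d → ℝ) (c : (Fin d → ℝ) → ℝ)
    (f : (Fin d → ℝ) → ℝ → ℝ) (u₀ : (Fin d → ℝ) → ℝ) (CF νA : ℝ)
    (v : (Fin d → ℝ) → ℝ → ℝ) (y : (Fin d → ℝ) → ℝ → Fin d → ℝ) (γ α₁ α₂ : ℝ) :
    Maj T a₀ a₁ A σ bb c f u₀ CF νA v y γ (fun _ => 0) α₁ α₂
      = σ * (∫ x in box a₀ a₁, (u₀ x - v x 0) ^ 2)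
        + ∫ t in (0 : ℝ)..T,
            (α₁ * ∫ x in box a₀ a₁, (A x)⁻¹ *ᵥ Rd A v y x t ⬝ᵥ Rd A v y x t)
            + α₂ * (CF ^ 2 / νA) * ∫ x in box a₀ a₁, Req σ bb c f v y x t ^ 2 := by
  simp [Maj]

theorem majorant_gap_with_exact_flux_general
    {d : ℕ}
    (a₀ a₁ : Fin d → ℝ)
    (T : ℝ) (hT : 0 < T)
    (A : (Fin d → ℝ) → Matrix (Fin d) (Fin d) ℝ)
    (νA νA' : ℝ) (hνA : 0 < νA)
    (hAell : ∀ x ∈ box a₀ a₁, ∀ ξ : Fin d → ℝ,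
      νA * (ξ ⬝ᵥ ξ) ≤ (A x).mulVec ξ ⬝ᵥ ξ ∧ (A x).mulVec ξ ⬝ᵥ ξ ≤ νA' * (ξ ⬝ᵥ ξ))
    (σ : ℝ)
    (bb : (Fin d → ℝ) → Fin d → ℝ)
    (c : (Fin d → ℝ) → ℝ)
    (CF : ℝ)
    (f u v : (Fin d → ℝ) → ℝ → ℝ) (u₀ : (Fin d → ℝ) → ℝ)
    (hu : ContDiff ℝ 2 fun p : (Fin d → ℝ) × ℝ => u p.1 p.2)
    (hv : ContDiff ℝ 2 fun p : (Fin d → ℝ) × ℝ => v p.1 p.2)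
    (hpde : ∀ x ∈ box a₀ a₁, ∀ t ∈ Set.Ioo 0 T,
      σ * tderiv u x t - divx (fun z s => (A z).mulVec (gradx u z s)) x t
        + bb x ⬝ᵥ gradx u x t + c x * u x t = f x t)
    (hvIC : ∀ x ∈ box a₀ a₁, v x 0 = u₀ x) :
    (∀ x ∈ box a₀ a₁, ∀ t ∈ Set.Ioo 0 T,
      Rd A v (fun z s => (A z).mulVec (gradx u z s)) x t
        = (A x).mulVec (gradx (fun z s => u z s - v z s) x t)
      ∧ Req σ bb c f v (fun z s => (A z).mulVec (gradx u z s)) x t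
        = σ * tderiv (fun z s => u z s - v z s) x t + c x * (u x t - v x t)
          + bb x ⬝ᵥ gradx (fun z s => u z s - v z s) x t)
    ∧ ∀ α₁ α₂ : ℝ, 0 < α₁ → 0 < α₂ → 1 / α₁ + 1 / α₂ = 1 →
        Maj T a₀ a₁ A σ bb c f u₀ CF νA v (fun z s => (A z).mulVec (gradx u z s))
            1 (fun _ => 0) α₁ α₂
          = ∫ t in (0 : ℝ)..T,
              (α₁ * ∫ x in box a₀ a₁,
                (A x).mulVec (gradx (fun z s => u z s - v z s) x t)
                  ⬝ᵥ gradx (fun z s => u z s - v z s) x t)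
              + α₂ * (CF ^ 2 / νA) * ∫ x in box a₀ a₁,
                  (σ * tderiv (fun z s => u z s - v z s) x t + c x * (u x t - v x t)
                    + bb x ⬝ᵥ gradx (fun z s => u z s - v z s) x t) ^ 2 := by
  have hud := hu.differentiable two_ne_zero
  have hvd := hv.differentiable two_ne_zero
  have hReq : ∀ x ∈ box a₀ a₁, ∀ t ∈ Set.Ioo 0 T, _ := fun x hx t ht =>
    Req_exact_flux (f := f) hud hvd (hpde x hx t ht)
  refine ⟨fun x hx t ht => ⟨Rd_exact_flux A hud hvd x t, hReq x hx t ht⟩,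
    fun α₁ α₂ _ _ _ => ?_⟩
  have hinitial : ∫ x in box a₀ a₁, (u₀ x - v x 0) ^ 2 = 0 :=
    setIntegral_eq_zero_of_forall_eq_zero fun x hx => by rw [hvIC x hx, sub_self, sq, mul_zero]
  rw [Maj_of_weight_zero, hinitial, mul_zero, zero_add]
  refine intervalIntegral.integral_congr_Ioo_of_le hT.le fun t ht => ?_
  have hdet x (hx : x ∈ box a₀ a₁) : IsUnit (A x).det :=
    isUnit_det_of_coercive hνA fun ξ => (hAell x hx ξ).1
  congr 2 <;> refine setIntegral_congr_fun (measurableSet_box a₀ a₁) fun x hx => ?_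
  · rw [Rd_exact_flux A hud hvd x t, inv_mulVec_mulVec_dotProduct (hdet x hx)]
  · rw [hReq x hx t ht]

/-- Remark of Section 2 of the paper: with the exact flux `y = A∇ₓu`, the residuals become
`R_d = A∇ₓe` and `R_eq = σe_t + ce + b·∇ₓe`, and for `ν = γ = 1`, `μ ≡ 0`, the majorant
equals `∫₀ᵀ ( α₁‖∇ₓe‖²_{A,Ω} + α₂(C_F²/ν_A)‖σe_t + ce + b·∇ₓe‖²_Ω ) dt`,
quantifying the irremovable gap between the error and the majorant. -/
theorem majorant_gap_with_exact_flux
    {d : ℕ} (hd : d ∈ ({1, 2, 3} : Set ℕ))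
    (a₀ a₁ : Fin d → ℝ) (hbox : ∀ i, a₀ i < a₁ i)
    (T : ℝ) (hT : 0 < T)
    (A : (Fin d → ℝ) → Matrix (Fin d) (Fin d) ℝ)
    (νA νA' : ℝ) (hνA : 0 < νA) (hνA' : νA ≤ νA') (hAc : Continuous A)
    (hAsymm : ∀ x ∈ box a₀ a₁, (A x).IsSymm)
    (hAell : ∀ x ∈ box a₀ a₁, ∀ ξ : Fin d → ℝ,
      νA * (ξ ⬝ᵥ ξ) ≤ (A x).mulVec ξ ⬝ᵥ ξ ∧ (A x).mulVec ξ ⬝ᵥ ξ ≤ νA' * (ξ ⬝ᵥ ξ))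
    (σ : ℝ) (hσ : 0 < σ)
    (bb : (Fin d → ℝ) → Fin d → ℝ) (hbb : ContDiff ℝ 1 bb)
    (c : (Fin d → ℝ) → ℝ) (hc : Continuous c)
    (δ₀ : ℝ) (hδ₀ : 0 < δ₀)
    (hδ : ∀ x ∈ box a₀ a₁, δ₀ ≤ c x - (1 / 2) * divv bb x)
    (CF : ℝ) (hCF : 0 < CF)
    (f uD u v : (Fin d → ℝ) → ℝ → ℝ) (u₀ : (Fin d → ℝ) → ℝ)
    (hf : Continuous fun p : (Fin d → ℝ) × ℝ => f p.1 p.2)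
    (hu : ContDiff ℝ 2 fun p : (Fin d → ℝ) × ℝ => u p.1 p.2)
    (hv : ContDiff ℝ 2 fun p : (Fin d → ℝ) × ℝ => v p.1 p.2)
    (hpde : ∀ x ∈ box a₀ a₁, ∀ t ∈ Set.Ioo 0 T,
      σ * tderiv u x t - divx (fun z s => (A z).mulVec (gradx u z s)) x t
        + bb x ⬝ᵥ gradx u x t + c x * u x t = f x t)
    (huD : ∀ x ∈ frontier (box a₀ a₁), ∀ t ∈ Set.Ioo 0 T, u x t = uD x t)
    (hvD : ∀ x ∈ frontier (box a₀ a₁), ∀ t ∈ Set.Ioo 0 T, v x t = uD x t)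
    (huIC : ∀ x ∈ box a₀ a₁, u x 0 = u₀ x)
    (hvIC : ∀ x ∈ box a₀ a₁, v x 0 = u₀ x)
    (hflux : ∀ t : ℝ, ContDiff ℝ 1 fun z => (A z).mulVec (gradx u z t)) :
    (∀ x ∈ box a₀ a₁, ∀ t ∈ Set.Ioo 0 T,
      Rd A v (fun z s => (A z).mulVec (gradx u z s)) x t
        = (A x).mulVec (gradx (fun z s => u z s - v z s) x t)
      ∧ Req σ bb c f v (fun z s => (A z).mulVec (gradx u z s)) x t
        = σ * tderiv (fun z s => u z s - v z s) x t + c x * (u x t - v x t)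
          + bb x ⬝ᵥ gradx (fun z s => u z s - v z s) x t)
    ∧ ∀ α₁ α₂ : ℝ, 0 < α₁ → 0 < α₂ → 1 / α₁ + 1 / α₂ = 1 →
        Maj T a₀ a₁ A σ bb c f u₀ CF νA v (fun z s => (A z).mulVec (gradx u z s))
            1 (fun _ => 0) α₁ α₂
          = ∫ t in (0 : ℝ)..T,
              (α₁ * ∫ x in box a₀ a₁,
                (A x).mulVec (gradx (fun z s => u z s - v z s) x t)
                  ⬝ᵥ gradx (fun z s => u z s - v z s) x t)
              + α₂ * (CF ^ 2 / νA) * ∫ x in box a₀ a₁,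
                  (σ * tderiv (fun z s => u z s - v z s) x t + c x * (u x t - v x t)
                    + bb x ⬝ᵥ gradx (fun z s => u z s - v z s) x t) ^ 2 :=
  majorant_gap_with_exact_flux_general a₀ a₁ T hT A νA νA' hνA hAell σ bb c CF f u v u₀ hu hv hpde
    hvIC
end
end
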